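/- Let α be a composition and σ ∈ S_{ℓ(α)}. The set of SPCTs of shape α and type σ contains a unique source tableau if and only if α is σ-simple. -/

import Mathlib

/-!
If `α` is not compatible with `σ` there is no SPCT at all, and if it is, the canonical filling
(row `r` holds the block of consecutive integers just after the rows lying `σ`-below it) is a
source tableau. A PACD pair `(i₀, j₀)` satisfying neither C1 nor C2 yields a second one: give the
last box of row `j₀` the value of the last box of row `i₀` and shift the values in between up by
one.

Conversely, let `α` be `σ`-simple. Above the largest descent `D` lying outside the first column, a
source tableau is built from runs of consecutive integers at the start of each row, and the triple
condition makes the row containing `D + 1` and the row containing `D` a PACD pair. Its C1/C2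
witnesses, and theirs in turn, give an infinite `σ`-decreasing chain of rows. So there is no such
descent, every row is a run, and the tableau is the canonical one.
-/

/-- `α` is compatible with `σ`: `α_i ≥ α_j` whenever `i < j` and `σ(i) > σ(j)`. -/
def Compatible {ℓ : ℕ} (α : Fin ℓ → ℕ) (σ : Equiv.Perm (Fin ℓ)) : Prop :=
  ∀ i j : Fin ℓ, i < j → σ j < σ i → α j ≤ α i

/-- `τ` is a standard permuted composition tableau (SPCT) of shape `α` (a composition of `n`
with `ℓ` rows, row `i` having boxes in columns `0,…,α i − 1`) and type `σ`:
the boxes are filled with the distinct entries `1,…,n`; the standardization of the first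
column read top to bottom is `σ` (expressed by order-equivalence with `σ`); rows weakly
decrease left to right; and the triple condition holds. -/
def IsSPCT {ℓ : ℕ} (n : ℕ) (α : Fin ℓ → ℕ) (σ : Equiv.Perm (Fin ℓ))
    (τ : Fin ℓ → ℕ → ℕ) : Prop :=
  (∀ (i : Fin ℓ) (c : ℕ), c < α i → 1 ≤ τ i c ∧ τ i c ≤ n) ∧
  (∀ (i : Fin ℓ) (c : ℕ) (i' : Fin ℓ) (c' : ℕ),
      c < α i → c' < α i' → τ i c = τ i' c' → i = i' ∧ c = c') ∧
  (∀ v : ℕ, 1 ≤ v → v ≤ n → ∃ (i : Fin ℓ) (c : ℕ), c < α i ∧ τ i c = v) ∧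
  (∀ i i' : Fin ℓ, τ i 0 < τ i' 0 ↔ σ i < σ i') ∧
  (∀ (i : Fin ℓ) (c : ℕ), c + 1 < α i → τ i (c + 1) ≤ τ i c) ∧
  (∀ (i i' : Fin ℓ) (c : ℕ), i < i' → c < α i → c + 1 < α i' →
      τ i' (c + 1) < τ i c → c + 1 < α i ∧ τ i' (c + 1) < τ i (c + 1))

/-- `d` is a descent of `τ`: the entry `d+1` lies weakly to the right of `d`. -/
def IsDescent {ℓ : ℕ} (α : Fin ℓ → ℕ) (τ : Fin ℓ → ℕ → ℕ) (d : ℕ) : Prop :=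
  ∃ (i : Fin ℓ) (c : ℕ) (i' : Fin ℓ) (c' : ℕ),
    c < α i ∧ c' < α i' ∧ τ i c = d ∧ τ i' c' = d + 1 ∧ c ≤ c'

/-- `τ` is a source tableau: an SPCT such that for every non-descent `d ≠ n`, the entry
`d+1` lies in the box immediately to the left of the box containing `d`. -/
def IsSourceTableau {ℓ : ℕ} (n : ℕ) (α : Fin ℓ → ℕ) (σ : Equiv.Perm (Fin ℓ))
    (τ : Fin ℓ → ℕ → ℕ) : Prop :=
  IsSPCT n α σ τ ∧
  ∀ d : ℕ, 1 ≤ d → d + 1 ≤ n → ¬ IsDescent α τ d →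
    ∀ (i : Fin ℓ) (c : ℕ), c < α i → τ i c = d → ∃ c', c = c' + 1 ∧ τ i c' = d + 1

/-- `(i,j)` is a permutation-ascending composition-descending (PACD) pair for `(α; σ)`. -/
def PACD {ℓ : ℕ} (α : Fin ℓ → ℕ) (σ : Equiv.Perm (Fin ℓ)) (i j : Fin ℓ) : Prop :=
  i < j ∧ σ i < σ j ∧ 2 ≤ α j ∧ α j ≤ α i

/-- `α` is `σ`-simple: it is compatible with `σ` and every PACD pair satisfies C1 or C2. -/
def SigmaSimple {ℓ : ℕ} (α : Fin ℓ → ℕ) (σ : Equiv.Perm (Fin ℓ)) : Prop :=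
  Compatible α σ ∧
  ∀ i j : Fin ℓ, PACD α σ i j →
    (∃ k, i < k ∧ k < j ∧ σ i < σ k ∧ σ k < σ j ∧ α k = α j - 1) ∨
    (∃ k, j < k ∧ σ i < σ k ∧ σ k < σ j ∧ α k = α j)

/-- The part `α_j` has a removable node with respect to `σ`: either `σ(j) = 1`
(the smallest value, `0` in `Fin ℓ`), or `α_j ≥ 2`, no `k < j` has `σ(k) < σ(j)` and
`α_k = α_j − 1`, and no `k > j` has `σ(k) < σ(j)` and `α_k = α_j`. -/
def Removable {ℓ : ℕ} (α : Fin ℓ → ℕ) (σ : Equiv.Perm (Fin ℓ)) (j : Fin ℓ) : Prop :=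
  (σ j : ℕ) = 0 ∨
  (2 ≤ α j ∧ (∀ k, k < j → σ k < σ j → α k ≠ α j - 1) ∧
    (∀ k, j < k → σ k < σ j → α k ≠ α j))

/-- The canonical source tableau `τ^σ_{C,α}`: row `r` is filled, in decreasing order from
left to right, with the consecutive block of integers following all entries of rows `r'`
with `σ r' < σ r`. -/
def canonEntry {ℓ : ℕ} (α : Fin ℓ → ℕ) (σ : Equiv.Perm (Fin ℓ)) (r : Fin ℓ) (c : ℕ) : ℕ :=
  (∑ j ∈ Finset.univ.filter (fun j => σ j < σ r), α j) + α r - c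

open Finset

section Counting
variable {ℓ : ℕ} (α : Fin ℓ → ℕ)

lemma exists_entry_eq_of_injective (f : Fin ℓ → ℕ → ℕ)
    (hbd : ∀ i c, c < α i → 1 ≤ f i c ∧ f i c ≤ ∑ i, α i)
    (hinj : ∀ i c i' c', c < α i → c' < α i' → f i c = f i' c' → i = i' ∧ c = c')
    {v : ℕ} (h1 : 1 ≤ v) (h2 : v ≤ ∑ i, α i) : ∃ i c, c < α i ∧ f i c = v := by
  obtain ⟨⟨i, c⟩, -, hv⟩ := surj_on_of_inj_on_of_card_le
    (s := (univ : Finset (Σ i, Fin (α i)))) (t := Icc 1 (∑ i, α i)) (fun b _ => f b.1 b.2)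
    (fun b _ => mem_Icc.2 (hbd b.1 b.2 b.2.2))
    (fun ⟨i, c⟩ ⟨i', c'⟩ _ _ h => by
      obtain ⟨rfl, hc⟩ := hinj i c i' c' c.2 c'.2 h
      rw [Fin.ext hc])
    (by simp) v (mem_Icc.2 ⟨h1, h2⟩)
  exact ⟨i, c, c.2, hv.symm⟩

lemma sum_eq_of_fills (f : Fin ℓ → ℕ → ℕ) (S : Finset (Fin ℓ)) (v : ℕ)
    (hinj : ∀ i c i' c', c < α i → c' < α i' → f i c = f i' c' → i = i' ∧ c = c')
    (hmaps : ∀ k ∈ S, ∀ x < α k, 1 ≤ f k x ∧ f k x ≤ v)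
    (hsurj : ∀ w, 1 ≤ w → w ≤ v → ∃ k ∈ S, ∃ x < α k, f k x = w) :
    ∑ k ∈ S, α k = v := by
  calc ∑ k ∈ S, α k = #(S.sigma fun k => (univ : Finset (Fin (α k)))) := by simp
    _ = #(Icc 1 v) := by
      refine card_bij (fun b _ => f b.1 b.2) (fun b hb => ?_) (fun ⟨i, c⟩ _ ⟨i', c'⟩ _ h => ?_)
        (fun w hw => ?_)
      · exact mem_Icc.2 (hmaps b.1 (mem_sigma.1 hb).1 b.2 b.2.2)
      · obtain ⟨rfl, hc⟩ := hinj i c i' c' c.2 c'.2 h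
        rw [Fin.ext hc]
      · obtain ⟨k, hk, x, hx, rfl⟩ := hsurj w (mem_Icc.1 hw).1 (mem_Icc.1 hw).2
        exact ⟨⟨k, ⟨x, hx⟩⟩, mem_sigma.2 ⟨hk, mem_univ _⟩, rfl⟩
    _ = v := by simp

end Counting

section SumBelow
variable {ℓ : ℕ} (α : Fin ℓ → ℕ) (σ : Equiv.Perm (Fin ℓ))

def sumBelow (r : Fin ℓ) : ℕ :=
  ∑ j ∈ univ.filter (fun j => σ j < σ r), α j

lemma canonEntry_eq (r : Fin ℓ) (c : ℕ) : canonEntry α σ r c = sumBelow α σ r + α r - c := rfl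

lemma sumBelow_add_self (r : Fin ℓ) :
    sumBelow α σ r + α r = ∑ j ∈ univ.filter (fun j => σ j ≤ σ r), α j := by
  have : univ.filter (fun j => σ j ≤ σ r) = insert r (univ.filter fun j => σ j < σ r) := by
    ext j
    simp [le_iff_lt_or_eq, σ.injective.eq_iff, or_comm]
  rw [this, sum_insert (by simp), add_comm, sumBelow]

variable {α σ}

lemma sumBelow_le_sumBelow {a b : Fin ℓ} (h : σ a ≤ σ b) : sumBelow α σ a ≤ sumBelow α σ b :=
  sum_le_sum_of_subset fun x hx => by
    simp only [mem_filter, mem_univ, true_and] at hx ⊢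
    exact hx.trans_le h

lemma sumBelow_add_le_sumBelow {a b : Fin ℓ} (h : σ a < σ b) :
    sumBelow α σ a + α a ≤ sumBelow α σ b := by
  rw [sumBelow_add_self]
  exact sum_le_sum_of_subset fun x hx => by
    simp only [mem_filter, mem_univ, true_and] at hx ⊢
    exact hx.trans_lt h

variable (α σ) in
lemma sumBelow_add_le_sum (r : Fin ℓ) : sumBelow α σ r + α r ≤ ∑ i, α i := by
  rw [sumBelow_add_self]
  exact sum_le_sum_of_subset (subset_univ _)

end SumBelow

namespace IsSPCT
variable {ℓ n : ℕ} {α : Fin ℓ → ℕ} {σ : Equiv.Perm (Fin ℓ)} {τ : Fin ℓ → ℕ → ℕ}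
  {i i' : Fin ℓ} {c c' : ℕ}

lemma one_le (hτ : IsSPCT n α σ τ) (hc : c < α i) : 1 ≤ τ i c := (hτ.1 i c hc).1

lemma le_size (hτ : IsSPCT n α σ τ) (hc : c < α i) : τ i c ≤ n := (hτ.1 i c hc).2

lemma eq_of_entry_eq (hτ : IsSPCT n α σ τ) (hc : c < α i) (hc' : c' < α i')
    (h : τ i c = τ i' c') : i = i' ∧ c = c' :=
  hτ.2.1 i c i' c' hc hc' h

lemma exists_entry_eq (hτ : IsSPCT n α σ τ) {v : ℕ} (h1 : 1 ≤ v) (h2 : v ≤ n) :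
    ∃ i c, c < α i ∧ τ i c = v :=
  hτ.2.2.1 v h1 h2

lemma first_col_lt_iff (hτ : IsSPCT n α σ τ) : τ i 0 < τ i' 0 ↔ σ i < σ i' := hτ.2.2.2.1 i i'

lemma triple (hτ : IsSPCT n α σ τ) (h : i < i') (hc : c < α i) (hc' : c + 1 < α i')
    (hlt : τ i' (c + 1) < τ i c) : c + 1 < α i ∧ τ i' (c + 1) < τ i (c + 1) :=
  hτ.2.2.2.2.2 i i' c h hc hc' hlt

lemma entry_succ_lt (hτ : IsSPCT n α σ τ) (hc : c + 1 < α i) : τ i (c + 1) < τ i c :=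
  (hτ.2.2.2.2.1 i c hc).lt_of_ne fun h => by
    have := (hτ.eq_of_entry_eq hc (by omega) h).2
    omega

lemma entry_le_entry (hτ : IsSPCT n α σ τ) (hcc' : c ≤ c') (hc' : c' < α i) :
    τ i c' ≤ τ i c := by
  induction c', hcc' using Nat.le_induction with
  | base => rfl
  | succ c' _ ih => exact (hτ.entry_succ_lt hc').le.trans (ih (by omega))

lemma first_col_le_of_le (hτ : IsSPCT n α σ τ) (h : σ i ≤ σ i') : τ i 0 ≤ τ i' 0 := by
  rcases h.lt_or_eq with h | h
  · exact (hτ.first_col_lt_iff.2 h).le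
  · rw [σ.injective h]

/-- The triple condition propagates `τ i' (c + 1) < τ i c` to all later columns of row `i'`. -/
lemma length_le_of_entry_lt (hτ : IsSPCT n α σ τ) (h : i < i') (hz : c < α i)
    (hz' : c + 1 < α i') (hlt : τ i' (c + 1) < τ i c) : α i' ≤ α i := by
  have key : ∀ k, c + k + 1 < α i' → c + k + 1 < α i ∧ τ i' (c + k + 1) < τ i (c + k + 1) := by
    intro k
    induction k with
    | zero => exact fun _ => hτ.triple h hz hz' hlt
    | succ k ih =>
      intro hk
      obtain ⟨hlen, hlt'⟩ := ih (by omega)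
      exact hτ.triple h hlen hk ((hτ.entry_succ_lt hk).trans hlt')
  have := (key (α i' - c - 2) (by omega)).1
  omega

lemma compatible (hτ : IsSPCT n α σ τ) (hpos : ∀ i, 0 < α i) : Compatible α σ := by
  intro i j hij hσ
  by_cases hj : α j = 1
  · exact hj ▸ hpos i
  exact hτ.length_le_of_entry_lt hij (hpos i) (by have := hpos j; omega)
    ((hτ.entry_succ_lt (by have := hpos j; omega)).trans (hτ.first_col_lt_iff.2 hσ))

end IsSPCT

/-- A source tableau only has to be checked off the first column: an entry `d < n` of the first
column is always a descent. -/
lemma IsSourceTableau.of_isSPCT {ℓ n : ℕ} {α : Fin ℓ → ℕ} {σ : Equiv.Perm (Fin ℓ)}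
    {τ : Fin ℓ → ℕ → ℕ} (hτ : IsSPCT n α σ τ)
    (h : ∀ i c, c + 1 < α i → τ i (c + 1) + 1 ≤ n → ¬ IsDescent α τ (τ i (c + 1)) →
      τ i c = τ i (c + 1) + 1) :
    IsSourceTableau n α σ τ := by
  refine ⟨hτ, fun d hd1 hdn hnd i c hc hv => ?_⟩
  rcases c with _ | c
  · obtain ⟨i', c', hc', hv'⟩ := hτ.exists_entry_eq (v := d + 1) (by omega) hdn
    exact absurd ⟨i, 0, i', c', hc, hc', hv, hv', c'.zero_le⟩ hnd
  · subst hv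
    exact ⟨c, rfl, h i c hc hdn hnd⟩

section Canonical
variable {ℓ : ℕ} {α : Fin ℓ → ℕ} {σ : Equiv.Perm (Fin ℓ)} {r r' : Fin ℓ} {c c' : ℕ}

lemma canonEntry_mem_Icc (hc : c < α r) :
    sumBelow α σ r + 1 ≤ canonEntry α σ r c ∧ canonEntry α σ r c ≤ sumBelow α σ r + α r := by
  rw [canonEntry_eq]
  omega

lemma canonEntry_lt_canonEntry (hσ : σ r < σ r') (hc : c < α r) (hc' : c' < α r') :
    canonEntry α σ r c < canonEntry α σ r' c' := by
  have := sumBelow_add_le_sumBelow (α := α) hσ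
  have := canonEntry_mem_Icc (σ := σ) hc
  have := canonEntry_mem_Icc (σ := σ) hc'
  omega

lemma canonEntry_inj (hc : c < α r) (hc' : c' < α r')
    (h : canonEntry α σ r c = canonEntry α σ r' c') : r = r' ∧ c = c' := by
  rcases lt_trichotomy (σ r) (σ r') with hσ | hσ | hσ
  · exact absurd h (canonEntry_lt_canonEntry hσ hc hc').ne
  · obtain rfl := σ.injective hσ
    rw [canonEntry_eq, canonEntry_eq] at h
    exact ⟨rfl, by omega⟩
  · exact absurd h (canonEntry_lt_canonEntry hσ hc' hc).ne'

lemma canonEntry_isSPCT (hpos : ∀ i, 0 < α i) (hcompat : Compatible α σ) :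
    IsSPCT (∑ i, α i) α σ (canonEntry α σ) := by
  have hbd : ∀ i c, c < α i → 1 ≤ canonEntry α σ i c ∧ canonEntry α σ i c ≤ ∑ i, α i :=
    fun i c hc => by
      have := canonEntry_mem_Icc (σ := σ) hc
      have := sumBelow_add_le_sum α σ i
      omega
  refine ⟨hbd, fun i c i' c' hc hc' h => canonEntry_inj hc hc' h,
    fun v h1 h2 => exists_entry_eq_of_injective α _ hbd
      (fun i c i' c' hc hc' h => canonEntry_inj hc hc' h) h1 h2,
    fun i i' => ?_, fun i c hc => by simp only [canonEntry_eq]; omega,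
    fun a b c hab hca hcb h => ?_⟩
  · rcases lt_trichotomy (σ i) (σ i') with hσ | hσ | hσ
    · simp [hσ, canonEntry_lt_canonEntry hσ (hpos i) (hpos i')]
    · simp [σ.injective hσ]
    · simp [hσ.not_gt, (canonEntry_lt_canonEntry hσ (hpos i') (hpos i)).not_gt]
  · rcases lt_trichotomy (σ a) (σ b) with hσ | hσ | hσ
    · exact absurd h (canonEntry_lt_canonEntry hσ hca hcb).not_gt
    · exact absurd (σ.injective hσ) hab.ne
    · have := hcompat a b hab hσ
      exact ⟨by omega, canonEntry_lt_canonEntry hσ hcb (by omega)⟩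

lemma canonEntry_isSourceTableau (hpos : ∀ i, 0 < α i) (hcompat : Compatible α σ) :
    IsSourceTableau (∑ i, α i) α σ (canonEntry α σ) :=
  .of_isSPCT (canonEntry_isSPCT hpos hcompat) fun i c hc _ _ => by
    simp only [canonEntry_eq]
    omega

end Canonical

section Cycle
variable {m t w w' : ℕ}

def cycleIcc (m t w : ℕ) : ℕ := if w = t then m else if m ≤ w ∧ w < t then w + 1 else w

lemma cycleIcc_self : cycleIcc m t t = m := if_pos rfl

lemma cycleIcc_of_lt (hmt : m ≤ t) (h : w < m) : cycleIcc m t w = w := by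
  unfold cycleIcc; split_ifs <;> omega

lemma cycleIcc_of_gt (h : t < w) : cycleIcc m t w = w := by
  unfold cycleIcc; split_ifs <;> omega

lemma lt_cycleIcc (hmt : m ≤ t) (hm : m ≤ w) (ht : w ≠ t) : m < cycleIcc m t w := by
  unfold cycleIcc; split_ifs <;> omega

lemma cycleIcc_lt_cycleIcc_iff (h : w ≠ t) (h' : w' ≠ t) :
    cycleIcc m t w < cycleIcc m t w' ↔ w < w' := by
  unfold cycleIcc; split_ifs <;> omega

lemma cycleIcc_injective (hmt : m ≤ t) (h : cycleIcc m t w = cycleIcc m t w') : w = w' := by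
  unfold cycleIcc at h; split_ifs at h <;> omega

lemma cycleIcc_mem_Icc {n : ℕ} (hm : 1 ≤ m) (hmt : m ≤ t) (ht : t ≤ n) (hw : 1 ≤ w ∧ w ≤ n) :
    1 ≤ cycleIcc m t w ∧ cycleIcc m t w ≤ n := by
  unfold cycleIcc; split_ifs <;> omega

lemma cycleIcc_succ (hm : w + 1 ≠ m) (ht : w + 1 ≠ t) (ht' : w ≠ t) :
    cycleIcc m t (w + 1) = cycleIcc m t w + 1 := by
  unfold cycleIcc; split_ifs <;> omega

end Cycle

section Alternative
variable {ℓ : ℕ} {α : Fin ℓ → ℕ} {σ : Equiv.Perm (Fin ℓ)} {i₀ j₀ a b r r' : Fin ℓ}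
  {c c' : ℕ}

/-- The second source tableau attached to a PACD pair `(i₀, j₀)`: the last box of row `j₀` takes
the value of the last box of row `i₀` in the canonical tableau, and the values in between move up
by one. -/
def altEntry (α : Fin ℓ → ℕ) (σ : Equiv.Perm (Fin ℓ)) (i₀ j₀ r : Fin ℓ) (c : ℕ) : ℕ :=
  cycleIcc (sumBelow α σ i₀ + 1) (sumBelow α σ j₀ + 1) (canonEntry α σ r c)

lemma canonEntry_of_succ_eq (hc : c + 1 = α r) : canonEntry α σ r c = sumBelow α σ r + 1 := by
  rw [canonEntry_eq]; omega

lemma canonEntry_ne_of_ne_last (hpos : ∀ i, 0 < α i) (hc : c < α r)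
    (hne : ¬(r = j₀ ∧ c + 1 = α j₀)) : canonEntry α σ r c ≠ sumBelow α σ j₀ + 1 := fun h => by
  have := hpos j₀
  rw [← canonEntry_of_succ_eq (c := α j₀ - 1) (by omega)] at h
  obtain ⟨rfl, rfl⟩ := canonEntry_inj hc (by omega) h
  omega

lemma sumBelow_lt_sumBelow (hpos : ∀ i, 0 < α i) (hσ : σ r < σ r') :
    sumBelow α σ r < sumBelow α σ r' := by
  have := sumBelow_add_le_sumBelow (α := α) hσ
  have := hpos r
  omega

lemma altEntry_of_succ_eq (hc : c + 1 = α j₀) : altEntry α σ i₀ j₀ j₀ c = sumBelow α σ i₀ + 1 := by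
  rw [altEntry, canonEntry_of_succ_eq hc, cycleIcc_self]

lemma altEntry_of_succ_succ_eq (hc : c + 2 = α j₀) :
    altEntry α σ i₀ j₀ j₀ c = sumBelow α σ j₀ + 2 := by
  rw [altEntry, cycleIcc_of_gt] <;> rw [canonEntry_eq] <;> omega

lemma altEntry_last_of_lt (hpos : ∀ i, 0 < α i) (hσ : σ i₀ < σ j₀) (hc : c + 1 = α i₀) :
    altEntry α σ i₀ j₀ i₀ c = sumBelow α σ i₀ + 2 := by
  have := sumBelow_lt_sumBelow hpos hσ
  rw [altEntry, canonEntry_of_succ_eq hc, cycleIcc]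
  split_ifs <;> omega

lemma altEntry_le_of_lt (hσ₀ : σ i₀ < σ j₀) (hσ : σ r < σ i₀) (hc : c < α r) :
    altEntry α σ i₀ j₀ r c ≤ sumBelow α σ i₀ := by
  have := sumBelow_add_le_sumBelow (α := α) hσ
  have := sumBelow_add_le_sumBelow (α := α) hσ₀
  have := canonEntry_mem_Icc (σ := σ) hc
  rw [altEntry, cycleIcc_of_lt] <;> omega

lemma lt_altEntry_of_le (hpos : ∀ i, 0 < α i) (hσ : σ i₀ < σ j₀) (hr : σ i₀ ≤ σ r)
    (hrj : r ≠ j₀) (hc : c < α r) : sumBelow α σ i₀ + 1 < altEntry α σ i₀ j₀ r c := by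
  have := sumBelow_lt_sumBelow hpos hσ
  have := sumBelow_le_sumBelow (α := α) hr
  have := canonEntry_mem_Icc (σ := σ) hc
  exact lt_cycleIcc (by omega) (by omega) (canonEntry_ne_of_ne_last hpos hc (by tauto))

lemma lt_altEntry_of_gt (hpos : ∀ i, 0 < α i) (hr : σ j₀ < σ r) (hc : c < α r) :
    sumBelow α σ j₀ + 1 < altEntry α σ i₀ j₀ r c := by
  have := sumBelow_add_le_sumBelow (α := α) hr
  have := canonEntry_mem_Icc (σ := σ) hc
  have := hpos j₀
  rw [altEntry, cycleIcc_of_gt] <;> omega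

lemma altEntry_lt_altEntry_iff (hpos : ∀ i, 0 < α i) (hc : c < α r) (hc' : c' < α r')
    (hne : ¬(r = j₀ ∧ c + 1 = α j₀)) (hne' : ¬(r' = j₀ ∧ c' + 1 = α j₀)) :
    altEntry α σ i₀ j₀ r c < altEntry α σ i₀ j₀ r' c' ↔
      canonEntry α σ r c < canonEntry α σ r' c' :=
  cycleIcc_lt_cycleIcc_iff (canonEntry_ne_of_ne_last hpos hc hne)
    (canonEntry_ne_of_ne_last hpos hc' hne')

lemma altEntry_triple_of_right_last (hpos : ∀ i, 0 < α i) (hcompat : Compatible α σ)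
    (hp : PACD α σ i₀ j₀)
    (hC1 : ¬∃ k, i₀ < k ∧ k < j₀ ∧ σ i₀ < σ k ∧ σ k < σ j₀ ∧ α k = α j₀ - 1)
    (ha : a < j₀) (hc : c + 2 = α j₀) (hca : c < α a)
    (hlt : altEntry α σ i₀ j₀ j₀ (c + 1) < altEntry α σ i₀ j₀ a c) :
    c + 1 < α a ∧ altEntry α σ i₀ j₀ j₀ (c + 1) < altEntry α σ i₀ j₀ a (c + 1) := by
  obtain ⟨hij, hσ, -, hαle⟩ := hp
  rw [altEntry_of_succ_eq (by omega)] at hlt ⊢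
  have hσa : σ i₀ ≤ σ a := le_of_not_gt fun h => by
    have := altEntry_le_of_lt hσ h hca
    omega
  have hlen : α j₀ ≤ α a := by
    rcases (σ.injective.ne ha.ne).lt_or_gt with h | h
    · rcases hσa.lt_or_eq with h' | h'
      · by_contra hshort
        rcases lt_or_gt_of_ne (show a ≠ i₀ from fun e => by simp [e] at h') with hai | hai
        · have := hcompat a i₀ hai h'
          omega
        · exact hC1 ⟨a, hai, ha, h', h, by omega⟩
      · rwa [← σ.injective h']
    · exact hcompat a j₀ ha h
  exact ⟨by omega, lt_altEntry_of_le hpos hσ hσa ha.ne (by omega)⟩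

lemma not_altEntry_triple_of_left_last (hpos : ∀ i, 0 < α i) (hcompat : Compatible α σ)
    (hσ : σ i₀ < σ j₀) (hb : j₀ < b) (hc : c + 1 = α j₀) (hcb : c + 1 < α b) :
    ¬altEntry α σ i₀ j₀ b (c + 1) < altEntry α σ i₀ j₀ j₀ c := by
  rw [altEntry_of_succ_eq hc]
  have hσb : σ j₀ < σ b := lt_of_le_of_ne
    (le_of_not_gt fun h => by have := hcompat j₀ b hb h; omega) (σ.injective.ne hb.ne)
  have := lt_altEntry_of_gt (i₀ := i₀) hpos hσb hcb
  have := sumBelow_add_le_sumBelow (α := α) hσ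
  omega

lemma altEntry_triple_of_left_second_last (hpos : ∀ i, 0 < α i) (hcompat : Compatible α σ)
    (hp : PACD α σ i₀ j₀)
    (hC2 : ¬∃ k, j₀ < k ∧ σ i₀ < σ k ∧ σ k < σ j₀ ∧ α k = α j₀)
    (hb : j₀ < b) (hc : c + 2 = α j₀) (hcb : c + 1 < α b)
    (hlt : altEntry α σ i₀ j₀ b (c + 1) < altEntry α σ i₀ j₀ j₀ c) :
    altEntry α σ i₀ j₀ b (c + 1) < altEntry α σ i₀ j₀ j₀ (c + 1) := by
  obtain ⟨hij, hσ, -, -⟩ := hp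
  rw [altEntry_of_succ_succ_eq hc] at hlt
  rw [altEntry_of_succ_eq (by omega)]
  rcases lt_trichotomy (σ b) (σ i₀) with h | h | h
  · exact (altEntry_le_of_lt hσ h hcb).trans_lt (by omega)
  · exact absurd (σ.injective h) (hij.trans hb).ne'
  · rcases (σ.injective.ne hb.ne').lt_or_gt with h' | h'
    · have := hcompat j₀ b hb h'
      exact absurd ⟨b, hb, h, h', by omega⟩ hC2
    · have := lt_altEntry_of_gt (i₀ := i₀) hpos h' hcb
      omega

lemma altEntry_isSPCT (hpos : ∀ i, 0 < α i) (hcompat : Compatible α σ) (hp : PACD α σ i₀ j₀)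
    (hC1 : ¬∃ k, i₀ < k ∧ k < j₀ ∧ σ i₀ < σ k ∧ σ k < σ j₀ ∧ α k = α j₀ - 1)
    (hC2 : ¬∃ k, j₀ < k ∧ σ i₀ < σ k ∧ σ k < σ j₀ ∧ α k = α j₀) :
    IsSPCT (∑ i, α i) α σ (altEntry α σ i₀ j₀) := by
  have hcanon := canonEntry_isSPCT hpos hcompat
  have hj := hp.2.2.1
  have hmt := sumBelow_add_le_sumBelow (α := α) hp.2.1
  have htop := sumBelow_add_le_sum α σ j₀
  have hbd : ∀ i c, c < α i → 1 ≤ altEntry α σ i₀ j₀ i c ∧ altEntry α σ i₀ j₀ i c ≤ ∑ i, α i :=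
    fun i c hc => cycleIcc_mem_Icc (by omega) (by omega) (by omega) (hcanon.1 i c hc)
  have hinj : ∀ i c i' c', c < α i → c' < α i' →
      altEntry α σ i₀ j₀ i c = altEntry α σ i₀ j₀ i' c' → i = i' ∧ c = c' :=
    fun i c i' c' hc hc' h => canonEntry_inj hc hc' (cycleIcc_injective (by omega) h)
  refine ⟨hbd, hinj, fun v h1 h2 => exists_entry_eq_of_injective α _ hbd hinj h1 h2,
    fun i i' => ?_, fun i c hc => ?_, fun a b c hab hca hcb hlt => ?_⟩
  · exact (altEntry_lt_altEntry_iff hpos (hpos i) (hpos i') (by omega) (by omega)).trans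
      hcanon.first_col_lt_iff
  · by_cases hs : i = j₀ ∧ c + 2 = α j₀
    · obtain ⟨rfl, hs⟩ := hs
      rw [altEntry_of_succ_eq (by omega), altEntry_of_succ_succ_eq hs]
      omega
    · exact ((altEntry_lt_altEntry_iff hpos hc (by omega) (fun h => hs ⟨h.1, by omega⟩)
        (by rintro ⟨rfl, h⟩; omega)).2 (hcanon.entry_succ_lt hc)).le
  · by_cases h1 : b = j₀ ∧ c + 2 = α j₀
    · obtain ⟨rfl, h1⟩ := h1
      exact altEntry_triple_of_right_last hpos hcompat hp hC1 hab h1 hca hlt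
    by_cases h2 : a = j₀ ∧ c + 1 = α j₀
    · obtain ⟨rfl, h2⟩ := h2
      exact absurd hlt (not_altEntry_triple_of_left_last hpos hcompat hp.2.1 hab h2 hcb)
    by_cases h3 : a = j₀ ∧ c + 2 = α j₀
    · obtain ⟨rfl, h3⟩ := h3
      exact ⟨by omega, altEntry_triple_of_left_second_last hpos hcompat hp hC2 hab h3 hcb hlt⟩
    have hne : ¬(b = j₀ ∧ c + 1 + 1 = α j₀) := fun h => h1 ⟨h.1, by omega⟩
    obtain ⟨hlen, hlt'⟩ :=
      hcanon.triple hab hca hcb ((altEntry_lt_altEntry_iff hpos hcb hca hne h2).1 hlt)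
    exact ⟨hlen, (altEntry_lt_altEntry_iff hpos hcb hlen hne
      fun h => h3 ⟨h.1, by omega⟩).2 hlt'⟩

lemma altEntry_isSourceTableau (hpos : ∀ i, 0 < α i) (hcompat : Compatible α σ)
    (hp : PACD α σ i₀ j₀)
    (hC1 : ¬∃ k, i₀ < k ∧ k < j₀ ∧ σ i₀ < σ k ∧ σ k < σ j₀ ∧ α k = α j₀ - 1)
    (hC2 : ¬∃ k, j₀ < k ∧ σ i₀ < σ k ∧ σ k < σ j₀ ∧ α k = α j₀) :
    IsSourceTableau (∑ i, α i) α σ (altEntry α σ i₀ j₀) := by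
  refine .of_isSPCT (altEntry_isSPCT hpos hcompat hp hC1 hC2) fun i c hc _ hnd => ?_
  by_cases hs : i = j₀ ∧ c + 2 = α j₀
  · -- the successor of the moved value sits at the end of the longer row `i₀`
    obtain ⟨rfl, hs⟩ := hs
    have := hpos i₀
    refine absurd ⟨i, c + 1, i₀, α i₀ - 1, hc, by omega, rfl, ?_, by have := hp.2.2.2; omega⟩ hnd
    rw [altEntry_last_of_lt hpos hp.2.1 (by omega), altEntry_of_succ_eq (by omega)]
  · have hstep : canonEntry α σ i c = canonEntry α σ i (c + 1) + 1 := by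
      simp only [canonEntry_eq]
      omega
    have hne : ∀ r, canonEntry α σ i c ≠ sumBelow α σ r + 1 := fun r =>
      canonEntry_ne_of_ne_last hpos (by omega) (by rintro ⟨rfl, h⟩; omega)
    rw [altEntry, altEntry, hstep, cycleIcc_succ (hstep ▸ hne i₀) (hstep ▸ hne j₀)
      (canonEntry_ne_of_ne_last hpos hc fun h => hs ⟨h.1, by omega⟩)]

lemma altEntry_ne_canonEntry (hpos : ∀ i, 0 < α i) (hσ : σ i₀ < σ j₀) :
    altEntry α σ i₀ j₀ j₀ (α j₀ - 1) ≠ canonEntry α σ j₀ (α j₀ - 1) := by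
  have := hpos j₀
  have := sumBelow_lt_sumBelow hpos hσ
  rw [altEntry_of_succ_eq (by omega), canonEntry_of_succ_eq (by omega)]
  omega

end Alternative

section HighLength
variable {ℓ n : ℕ} {α : Fin ℓ → ℕ} {σ : Equiv.Perm (Fin ℓ)} {τ : Fin ℓ → ℕ → ℕ} {D x : ℕ}
  {i : Fin ℓ}

/-- `d` is a descent whose entry `d` lies outside the first column. -/
def IsInnerDescent (α : Fin ℓ → ℕ) (τ : Fin ℓ → ℕ → ℕ) (d : ℕ) : Prop :=
  ∃ (i : Fin ℓ) (c : ℕ) (i' : Fin ℓ) (c' : ℕ),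
    c + 1 < α i ∧ c' < α i' ∧ τ i (c + 1) = d ∧ τ i' c' = d + 1 ∧ c + 1 ≤ c'

/-- The length of the initial segment of row `i` whose entries exceed `D`. -/
def highLength (α : Fin ℓ → ℕ) (τ : Fin ℓ → ℕ → ℕ) (D : ℕ) (i : Fin ℓ) : ℕ :=
  Nat.find (⟨α i, Or.inl le_rfl⟩ : ∃ x, α i ≤ x ∨ τ i x ≤ D)

lemma highLength_le : highLength α τ D i ≤ α i := Nat.find_min' _ (Or.inl le_rfl)

lemma highLength_le_of_le (h : τ i x ≤ D) : highLength α τ D i ≤ x := Nat.find_min' _ (Or.inr h)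

lemma entry_highLength_le (h : highLength α τ D i < α i) : τ i (highLength α τ D i) ≤ D :=
  (Nat.find_spec (⟨α i, Or.inl le_rfl⟩ : ∃ x, α i ≤ x ∨ τ i x ≤ D)).resolve_left (by
    unfold highLength at h; omega)

lemma IsSPCT.lt_highLength_iff (hτ : IsSPCT n α σ τ) :
    x < highLength α τ D i ↔ x < α i ∧ D < τ i x := by
  refine ⟨fun h => by simpa using Nat.find_min _ h, fun ⟨hx, hDx⟩ => lt_of_not_ge fun hle => ?_⟩
  have := entry_highLength_le (hle.trans_lt hx)
  have := hτ.entry_le_entry hle hx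
  omega

lemma IsSPCT.length_le_of_highLength_le {p r : Fin ℓ} (hτ : IsSPCT n α σ τ) (hrp : r < p)
    (hp : D < τ p 0) (hKp : highLength α τ D p < α p)
    (hK : highLength α τ D p ≤ highLength α τ D r) : α p ≤ α r := by
  obtain ⟨k, hk⟩ : ∃ k, highLength α τ D p = k + 1 :=
    Nat.exists_eq_add_one.2 (hτ.lt_highLength_iff.2 ⟨by omega, hp⟩)
  have hr := hτ.lt_highLength_iff.1 (show k < highLength α τ D r by omega)
  have := entry_highLength_le hKp
  rw [hk] at this
  exact hτ.length_le_of_entry_lt hrp hr.1 (by omega) (by omega)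

end HighLength

namespace IsSourceTableau
variable {ℓ n D : ℕ} {α : Fin ℓ → ℕ} {σ : Equiv.Perm (Fin ℓ)} {τ : Fin ℓ → ℕ → ℕ}
  {i k p : Fin ℓ} {c x y : ℕ}

/-- Above the largest inner descent, the successor of an entry outside the first column is not a
descent, so it sits immediately to the left. -/
lemma entry_eq_succ_of_gt (hτ : IsSourceTableau n α σ τ)
    (hD : ∀ v, D < v → ¬IsInnerDescent α τ v) (hy : y + 1 < α i) (hDy : D < τ i (y + 1)) :
    τ i y = τ i (y + 1) + 1 := by
  have hS := hτ.1
  have hvn : τ i (y + 1) + 1 ≤ n := by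
    have := hS.entry_succ_lt hy
    have := hS.le_size (i := i) (c := y) (by omega)
    omega
  obtain ⟨i', c', hc', hv'⟩ := hS.exists_entry_eq (v := τ i (y + 1) + 1) (by omega) hvn
  have hcc' : c' < y + 1 := lt_of_not_ge fun h => hD _ hDy ⟨i, y, i', c', hy, hc', rfl, hv', h⟩
  have hnd : ¬IsDescent α τ (τ i (y + 1)) := by
    rintro ⟨a, ca, a', ca', ha, ha', hav, hav', hle⟩
    obtain ⟨rfl, rfl⟩ := hS.eq_of_entry_eq ha hy hav
    obtain ⟨rfl, rfl⟩ := hS.eq_of_entry_eq ha' hc' (hav'.trans hv'.symm)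
    omega
  obtain ⟨c'', hc'', hv''⟩ := hτ.2 _ (hS.one_le hy) hvn hnd i (y + 1) hy rfl
  obtain rfl : c'' = y := by omega
  exact hv''

lemma first_col_eq_add (hτ : IsSourceTableau n α σ τ) (hD : ∀ v, D < v → ¬IsInnerDescent α τ v)
    (hx : x < α i) (hDx : D < τ i x) : τ i 0 = τ i x + x := by
  induction x with
  | zero => rfl
  | succ x ih =>
    have := hτ.entry_eq_succ_of_gt hD hx hDx
    have := ih (by omega) (by omega)
    omega

lemma first_col_lt_of_lt (hτ : IsSourceTableau n α σ τ)
    (hD : ∀ v, D < v → ¬IsInnerDescent α τ v) (hi : 0 < α i) (hσ : σ i < σ k) (hx : x < α k)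
    (hDx : D < τ k x) : τ i 0 < τ k x := by
  by_contra! hle
  have hlt := hτ.1.first_col_lt_iff.2 hσ
  have hk := hτ.first_col_eq_add hD hx hDx
  have hyx : τ k 0 - τ i 0 ≤ x := by omega
  have hky := hτ.first_col_eq_add hD (hyx.trans_lt hx)
    (hDx.trans_le (hτ.1.entry_le_entry hyx hx))
  have := (hτ.1.eq_of_entry_eq (hyx.trans_lt hx) hi (show τ k (τ k 0 - τ i 0) = τ i 0 by omega)).2
  omega

lemma highLength_le_of_lt {r : Fin ℓ} (hτ : IsSourceTableau n α σ τ)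
    (hD : ∀ v, D < v → ¬IsInnerDescent α τ v) (hpr : p < r) (hσ : σ r < σ p) (hp : D < τ p 0)
    (hKp : highLength α τ D p < α p) : highLength α τ D r ≤ highLength α τ D p := by
  by_contra! hlt
  obtain ⟨k, hk⟩ : ∃ k, highLength α τ D p = k + 1 :=
    Nat.exists_eq_add_one.2 (hτ.1.lt_highLength_iff.2 ⟨by omega, hp⟩)
  obtain ⟨hkr, hDr⟩ := hτ.1.lt_highLength_iff.1 (show k + 1 < highLength α τ D r by omega)
  obtain ⟨hkp, hDp⟩ := hτ.1.lt_highLength_iff.1 (show k < highLength α τ D p by omega)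
  have := hτ.first_col_eq_add hD hkr hDr
  have := hτ.first_col_eq_add hD hkp hDp
  have := hτ.1.first_col_lt_iff.2 hσ
  have := (hτ.1.triple hpr hkp hkr (by omega)).2
  have := entry_highLength_le hKp
  rw [hk] at this
  omega

/-- Proved by descent along C1/C2 witnesses, each of which again satisfies the hypotheses with a
smaller value of `σ`. -/
theorem highLength_eq_length (hτ : IsSourceTableau n α σ τ)
    (hD : ∀ v, D < v → ¬IsInnerDescent α τ v) (hsimple : SigmaSimple α σ)
    (hhigh : ∀ k, σ p < σ k → D < τ k 0) (q : Fin ℓ) (hpq : p < q) (hσ : σ p < σ q)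
    (hα : α q ≤ α p) : highLength α τ D q = α q := by
  by_contra hne
  have hKq : highLength α τ D q < α q := lt_of_le_of_ne highLength_le hne
  have hK1 : 0 < highLength α τ D q := hτ.1.lt_highLength_iff.2 ⟨by omega, hhigh q hσ⟩
  rcases hsimple.2 p q ⟨hpq, hσ, by omega, hα⟩ with
    ⟨k, hpk, hkq, hσpk, hσkq, hαk⟩ | ⟨k, hqk, hσpk, hσkq, hαk⟩
  · have hKk := hτ.highLength_eq_length hD hsimple hhigh k hpk hσpk (by omega)
    have := hτ.1.length_le_of_highLength_le hkq (hhigh q hσ) hKq (by omega)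
    omega
  · have hKk := hτ.highLength_eq_length hD hsimple hhigh k (hpq.trans hqk) hσpk (by omega)
    have := hτ.highLength_le_of_lt hD hqk hσkq (hhigh q hσ) hKq
    omega
termination_by (σ q : ℕ)
decreasing_by all_goals assumption

lemma not_isInnerDescent_of_forall_gt (hτ : IsSourceTableau n α σ τ)
    (hsimple : SigmaSimple α σ) (hD : ∀ v, D < v → ¬IsInnerDescent α τ v) :
    ¬IsInnerDescent α τ D := by
  rintro ⟨j, c, b, e, hcj, heb, hjc, hbe, hce⟩
  have hj : D < τ j 0 :=
    hjc ▸ (hτ.1.entry_succ_lt hcj).trans_le (hτ.1.entry_le_entry c.zero_le (by omega))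
  have hb : D < τ b 0 := (hτ.1.entry_le_entry e.zero_le heb).trans_lt' (by omega)
  have hKj : highLength α τ D j ≤ c + 1 := highLength_le_of_le hjc.le
  have hKb : e < highLength α τ D b := hτ.1.lt_highLength_iff.2 ⟨heb, by omega⟩
  have hσbj : σ b < σ j := by
    refine lt_of_le_of_ne (le_of_not_gt fun h => ?_) fun h => ?_
    · have := hτ.first_col_lt_of_lt hD (by omega) h heb (by omega)
      omega
    · rw [σ.injective h] at hKb
      omega
  have hbj : b < j := by
    refine lt_of_le_of_ne (le_of_not_gt fun h => ?_) fun h => hσbj.ne (congrArg σ h)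
    have := hτ.highLength_le_of_lt hD h hσbj hj (by omega)
    omega
  have hhigh : ∀ k, σ b < σ k → D < τ k 0 := fun k h => hb.trans (hτ.1.first_col_lt_iff.2 h)
  have := hτ.highLength_eq_length hD hsimple hhigh j hbj hσbj
    (hτ.1.length_le_of_highLength_le hbj hj (by omega) (by omega))
  omega

theorem not_isInnerDescent (hτ : IsSourceTableau n α σ τ) (hsimple : SigmaSimple α σ) (d : ℕ) :
    ¬IsInnerDescent α τ d := by
  intro hd
  have hdn : d + 1 ≤ n := by
    obtain ⟨-, -, i', c', -, hc', -, hv', -⟩ := hd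
    exact hv' ▸ hτ.1.le_size hc'
  exact hτ.not_isInnerDescent_of_forall_gt hsimple (fun v hv => hτ.not_isInnerDescent hsimple v) hd
termination_by n - d

/-- Without inner descents every row is a run of consecutive integers, so the top entry of a row
counts the boxes in the rows weakly below it in the `σ`-order. -/
lemma eq_canonEntry_of_forall_not_isInnerDescent (hτ : IsSourceTableau n α σ τ)
    (hD : ∀ v, ¬IsInnerDescent α τ v) (hc : c < α i) :
    τ i c = canonEntry α σ i c := by
  have hD0 : ∀ v, 0 < v → ¬IsInnerDescent α τ v := fun v _ => hD v
  have htop : ∑ k ∈ univ.filter (fun k => σ k ≤ σ i), α k = τ i 0 := by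
    refine sum_eq_of_fills α τ _ _ (fun _ _ _ _ => hτ.1.eq_of_entry_eq)
      (fun k hk x hx => ⟨hτ.1.one_le hx, (hτ.1.entry_le_entry x.zero_le hx).trans
        (hτ.1.first_col_le_of_le (mem_filter.1 hk).2)⟩) fun w h1 h2 => ?_
    obtain ⟨k, x, hx, rfl⟩ := hτ.1.exists_entry_eq h1 (h2.trans (hτ.1.le_size (by omega)))
    refine ⟨k, mem_filter.2 ⟨mem_univ _, le_of_not_gt fun h => ?_⟩, x, hx, rfl⟩
    have := hτ.first_col_lt_of_lt hD0 (by omega) h hx (hτ.1.one_le hx)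
    omega
  have := hτ.first_col_eq_add hD0 hc (hτ.1.one_le hc)
  rw [canonEntry_eq]
  have := sumBelow_add_self α σ i
  omega

lemma eq_canonEntry (hτ : IsSourceTableau n α σ τ) (hsimple : SigmaSimple α σ)
    (hc : c < α i) : τ i c = canonEntry α σ i c :=
  hτ.eq_canonEntry_of_forall_not_isInnerDescent (hτ.not_isInnerDescent hsimple) hc

end IsSourceTableau

/-- The set of SPCTs of shape `α` and type `σ` contains a unique source tableau
(uniqueness meaning any two source tableaux agree on all boxes) if and only if `α` is
`σ`-simple. -/
theorem unique_source_iff_sigmaSimple {ℓ : ℕ} (α : Fin ℓ → ℕ) (σ : Equiv.Perm (Fin ℓ))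
    (hpos : ∀ i, 0 < α i) :
    ((∃ τ : Fin ℓ → ℕ → ℕ, IsSourceTableau (∑ i, α i) α σ τ) ∧
      ∀ τ τ' : Fin ℓ → ℕ → ℕ, IsSourceTableau (∑ i, α i) α σ τ →
        IsSourceTableau (∑ i, α i) α σ τ' →
        ∀ (i : Fin ℓ) (c : ℕ), c < α i → τ i c = τ' i c) ↔
    SigmaSimple α σ := by
  constructor
  · rintro ⟨⟨τ, hτ⟩, huniq⟩
    have hcompat := hτ.1.compatible hpos
    refine ⟨hcompat, fun i j hp => ?_⟩
    by_contra hC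
    rw [not_or] at hC
    have := hp.2.2.1
    exact altEntry_ne_canonEntry hpos hp.2.1 <| huniq _ _
      (altEntry_isSourceTableau hpos hcompat hp hC.1 hC.2)
      (canonEntry_isSourceTableau hpos hcompat) j (α j - 1) (by omega)
  · intro hsimple
    refine ⟨⟨_, canonEntry_isSourceTableau hpos hsimple.1⟩, fun τ τ' hτ hτ' i c hc => ?_⟩
    rw [hτ.eq_canonEntry hsimple hc, hτ'.eq_canonEntry hsimple hc]
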